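/- arXiv:1605.07864 — 2 statements merged into one kernel-verified Lean document; each statement's English description precedes it below -/
import Mathlib

section
/- Let Γ_1, Γ_2, Γ_3 ∈ ℝ∖{0} and z_1, z_2, z_3 ∈ ℝ² be the vertices of an equilateral triangle with side length s > 0 satisfying Γ_1 z_1 + Γ_2 z_2 + Γ_3 z_3 = 0. Then Z_k(t) = e^{-ωJt} z_k, k = 1,2,3, with ω = (Γ_1 + Γ_2 + Γ_3)/(π s²), is a solution of the three-vortex system Γ_k ż_k = J ∇_{z_k} H_0(z) with H_0(z) = -(1/2π) Σ_{j≠k} Γ_j Γ_k log|z_j - z_k|. -/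
open scoped RealInnerProductSpace
open Finset

/- ℝ² is identified with ℂ; the symplectic matrix J = [[0,1],[-1,0]] acts as
multiplication by `-Complex.I`, and `e^{-ωJt}` as multiplication by `exp(ω t I)`. -/

/-- The Kirchhoff–Onsager functional. -/
noncomputable def H0 {N : ℕ} (Γ : Fin N → ℝ) (z : Fin N → ℂ) : ℝ :=
  -(1 / (2 * Real.pi)) *
    ∑ j, ∑ k, if j = k then 0 else Γ j * Γ k * Real.log ‖z j - z k‖

/-- The gradient of a Hamiltonian with respect to the k-th planar variable. -/
noncomputable def gradk {N : ℕ} (Ham : (Fin N → ℂ) → ℝ) (z : Fin N → ℂ) (k : Fin N) : ℂ :=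
  gradient (fun w => Ham (Function.update z k w)) (z k)

/-- `z` solves the Hamiltonian system Γ_k ż_k = J ∇_{z_k} Ham(z). -/
def SolvesHS {N : ℕ} (Γ : Fin N → ℝ) (Ham : (Fin N → ℂ) → ℝ) (z : ℝ → Fin N → ℂ) : Prop :=
  ∀ t k, DifferentiableAt ℝ (fun s => z s k) t ∧
    (Γ k : ℂ) * deriv (fun s => z s k) t = -Complex.I * gradk Ham (z t) k

/-! Moving the `k`-th vortex changes only the terms of `H0` that involve it, so
`∇_{z_k} H0 = -(1/π) ∑_{j ≠ k} Γ_k Γ_j (z_k - z_j) / |z_k - z_j|²`. If all mutual distances are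
`s` and `∑ Γ_j z_j = 0`, then `∑_{j ≠ k} Γ_j (z_k - z_j) = (∑ Γ_j) z_k`, so the gradient is
`-Γ_k ω z_k`. Rotations preserve both hypotheses, so along `Z(t) = e^{iωt} z` we get
`J ∇_{z_k} H0 = -i · (-Γ_k ω Z_k) = Γ_k Ż_k`. -/

open InnerProductSpace

section Gradient

variable {F : Type*} [NormedAddCommGroup F] [InnerProductSpace ℝ F] [CompleteSpace F]
  {f : F → ℝ} {f' x : F}

theorem HasGradientAt.const_add (c : ℝ) (hf : HasGradientAt f f' x) :
    HasGradientAt (fun w => c + f w) f' x := by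
  rw [hasGradientAt_iff_hasFDerivAt] at *
  exact hf.const_add c

theorem HasGradientAt.const_mul (c : ℝ) (hf : HasGradientAt f f' x) :
    HasGradientAt (fun w => c * f w) (c • f') x := by
  rw [hasGradientAt_iff_hasFDerivAt] at *
  simpa using hf.const_mul c

theorem HasGradientAt.sum {ι : Type*} {u : Finset ι} {g : ι → F → ℝ} {g' : ι → F}
    (h : ∀ i ∈ u, HasGradientAt (g i) (g' i) x) :
    HasGradientAt (fun w => ∑ i ∈ u, g i w) (∑ i ∈ u, g' i) x := by
  simp only [hasGradientAt_iff_hasFDerivAt, map_sum] at *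
  exact HasFDerivAt.fun_sum h

theorem hasGradientAt_log_norm_sub {a : F} (h : x ≠ a) :
    HasGradientAt (fun w => Real.log ‖w - a‖) ((‖x - a‖ ^ 2)⁻¹ • (x - a)) x := by
  have hsq : ‖x - a‖ ^ 2 ≠ 0 := by positivity [sub_ne_zero.mpr h]
  have hlog := (((hasFDerivAt_id x).sub_const a).norm_sq.log hsq).const_mul (1 / 2 : ℝ)
  have hfun : (fun w => 1 / 2 * Real.log (‖id w - a‖ ^ 2)) = fun w => Real.log ‖w - a‖ := by
    funext w
    rw [Real.log_pow]
    simp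
  rw [hasGradientAt_iff_hasFDerivAt, ← hfun]
  refine hlog.congr_fderiv ?_
  ext v
  simp only [one_div, id_eq, map_sub, ContinuousLinearMap.comp_id,
    smul_apply, sub_apply, coe_innerSL_apply,
    nsmul_eq_mul, Nat.cast_ofNat, smul_eq_mul, map_smul, toDual_apply_apply]
  ring

end Gradient

theorem Finset.sum_sum_eq_sum_sum_erase_add_two_mul {ι R : Type*} [Fintype ι] [DecidableEq ι]
    [CommSemiring R] (P : ι → ι → R) (hsymm : ∀ j l, P j l = P l j) (hdiag : ∀ j, P j j = 0)
    (k : ι) :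
    ∑ j, ∑ l, P j l = ∑ j ∈ univ.erase k, ∑ l ∈ univ.erase k, P j l
      + 2 * ∑ j ∈ univ.erase k, P k j := by
  have hrow : ∀ j, ∑ l, P j l = P j k + ∑ l ∈ univ.erase k, P j l := fun j =>
    (add_sum_erase _ _ (mem_univ k)).symm
  rw [← add_sum_erase _ _ (mem_univ k), hrow k, hdiag, zero_add]
  simp only [hrow, sum_add_distrib, hsymm _ k]
  ring

theorem H0_eq_sum_erase_sub {N : ℕ} (Γ : Fin N → ℝ) (z : Fin N → ℂ) (k : Fin N) :
    H0 Γ z = -(1 / (2 * Real.pi)) * ∑ j ∈ univ.erase k, ∑ l ∈ univ.erase k,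
        (if j = l then 0 else Γ j * Γ l * Real.log ‖z j - z l‖)
      - 1 / Real.pi * ∑ j ∈ univ.erase k, Γ k * Γ j * Real.log ‖z k - z j‖ := by
  rw [H0, sum_sum_eq_sum_sum_erase_add_two_mul _ ?_ (by simp) k]
  · have hoff : ∑ j ∈ univ.erase k, (if k = j then 0 else Γ k * Γ j * Real.log ‖z k - z j‖)
        = ∑ j ∈ univ.erase k, Γ k * Γ j * Real.log ‖z k - z j‖ :=
      sum_congr rfl fun j hj => if_neg (ne_of_mem_erase hj).symm
    rw [hoff]
    field_simp
    ring
  · intro j l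
    split_ifs with hjl hlj hlj
    · rfl
    · exact absurd hjl.symm hlj
    · exact absurd hlj.symm hjl
    · rw [norm_sub_rev, mul_comm (Γ j)]

theorem hasGradientAt_H0_update {N : ℕ} (Γ : Fin N → ℝ) (z : Fin N → ℂ) (k : Fin N)
    (hz : ∀ j ≠ k, z k ≠ z j) :
    HasGradientAt (fun w => H0 Γ (Function.update z k w))
      (∑ j ∈ univ.erase k, (-(Γ k * Γ j) / (Real.pi * ‖z k - z j‖ ^ 2)) • (z k - z j)) (z k) := by
  have hfun : (fun w => H0 Γ (Function.update z k w)) = fun w =>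
      -(1 / (2 * Real.pi)) * ∑ j ∈ univ.erase k, ∑ l ∈ univ.erase k,
        (if j = l then 0 else Γ j * Γ l * Real.log ‖z j - z l‖)
      + -(1 / Real.pi) * ∑ j ∈ univ.erase k, Γ k * Γ j * Real.log ‖w - z j‖ := by
    funext w
    rw [H0_eq_sum_erase_sub _ _ k, sub_eq_add_neg, ← neg_mul]
    congr 2 <;> refine sum_congr rfl fun j hj => ?_
    · refine sum_congr rfl fun l hl => ?_
      rw [Function.update_of_ne (ne_of_mem_erase hj), Function.update_of_ne (ne_of_mem_erase hl)]
    · rw [Function.update_self, Function.update_of_ne (ne_of_mem_erase hj)]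
  rw [hfun]
  convert ((HasGradientAt.sum fun j hj => (hasGradientAt_log_norm_sub
    (hz j (ne_of_mem_erase hj))).const_mul (Γ k * Γ j)).const_mul _).const_add _ using 1
  rw [smul_sum]
  refine sum_congr rfl fun j _ => ?_
  rw [smul_smul, smul_smul]
  congr 1
  field_simp

theorem gradk_H0 {N : ℕ} (Γ : Fin N → ℝ) (z : Fin N → ℂ) (k : Fin N)
    (hz : ∀ j ≠ k, z k ≠ z j) :
    gradk (H0 Γ) z k =
      ∑ j ∈ univ.erase k, (-(Γ k * Γ j) / (Real.pi * ‖z k - z j‖ ^ 2)) • (z k - z j) :=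
  (hasGradientAt_H0_update Γ z k hz).gradient

theorem gradk_H0_of_equidistant {N : ℕ} (Γ : Fin N → ℝ) (z : Fin N → ℂ) (k : Fin N) {s : ℝ}
    (hs : s ≠ 0) (hz : ∀ j ≠ k, ‖z k - z j‖ = s) (hc : ∑ j, Γ j • z j = 0) :
    gradk (H0 Γ) z k = (-(Γ k * ∑ j, Γ j) / (Real.pi * s ^ 2)) • z k := by
  have hne : ∀ j ≠ k, z k ≠ z j := fun j hj h => hs (by rw [← hz j hj, h, sub_self, norm_zero])
  calc gradk (H0 Γ) z k
      = ∑ j ∈ univ.erase k, (-(Γ k * Γ j) / (Real.pi * s ^ 2)) • (z k - z j) := by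
        rw [gradk_H0 Γ z k hne]
        exact sum_congr rfl fun j hj => by rw [hz j (ne_of_mem_erase hj)]
    _ = (-Γ k / (Real.pi * s ^ 2)) • ∑ j, Γ j • (z k - z j) := by
        rw [← sum_erase univ (f := fun j => Γ j • (z k - z j)) (a := k) (by simp), smul_sum]
        refine sum_congr rfl fun j _ => ?_
        rw [smul_smul]
        ring_nf
    _ = (-Γ k / (Real.pi * s ^ 2)) • (∑ j, Γ j) • z k := by
        simp only [smul_sub, sum_sub_distrib, ← sum_smul, hc, sub_zero]
    _ = (-(Γ k * ∑ j, Γ j) / (Real.pi * s ^ 2)) • z k := by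
        rw [smul_smul]
        ring_nf

theorem hasDerivAt_cexp_mul_I_mul (ω : ℝ) (c : ℂ) (t : ℝ) :
    HasDerivAt (fun t : ℝ => Complex.exp (ω * t * Complex.I) * c)
      (ω * Complex.I * Complex.exp (ω * t * Complex.I) * c) t := by
  have h : HasDerivAt (fun t : ℝ => (ω : ℂ) * t * Complex.I) (ω * Complex.I) t := by
    simpa using ((Complex.ofRealCLM.hasDerivAt (x := t)).const_mul (ω : ℂ)).mul_const Complex.I
  exact (h.cexp.mul_const c).congr_deriv (by ring)

theorem solvesHS_H0_rotation_of_equidistant {N : ℕ} (Γ : Fin N → ℝ) (z : Fin N → ℂ) {s : ℝ}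
    (hs : s ≠ 0) (hz : Pairwise fun j k => ‖z j - z k‖ = s) (hc : ∑ j, Γ j • z j = 0)
    (ω : ℝ) (hω : ω = (∑ j, Γ j) / (Real.pi * s ^ 2))
    (Z : ℝ → Fin N → ℂ) (hZ : ∀ t k, Z t k = Complex.exp (ω * t * Complex.I) * z k) :
    SolvesHS Γ (H0 Γ) Z := by
  intro t k
  set e := Complex.exp (ω * t * Complex.I)
  have he : ‖e‖ = 1 := by simp [e, Complex.norm_exp]
  have hZt : Z t = fun j => e * z j := funext (hZ t)
  have hZk : (fun t => Z t k) = fun t : ℝ => Complex.exp (ω * t * Complex.I) * z k :=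
    funext fun t => hZ t k
  have hgrad : gradk (H0 Γ) (Z t) k = (-(Γ k * ω)) • (e * z k) := by
    rw [hZt, gradk_H0_of_equidistant Γ _ k hs, hω]
    · ring_nf
    · intro j hj
      rw [← mul_sub, norm_mul, he, one_mul, hz hj.symm]
    · simp_rw [← mul_smul_comm, ← mul_sum, hc, mul_zero]
  have hder := hasDerivAt_cexp_mul_I_mul ω (z k) t
  rw [hZk, hder.deriv, hgrad, Complex.real_smul]
  refine ⟨hder.differentiableAt, ?_⟩
  push_cast
  ring

theorem stmt2_general (Γ : Fin 3 → ℝ)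
    (z : Fin 3 → ℂ) (s : ℝ) (hs : 0 < s)
    (h01 : ‖z 0 - z 1‖ = s) (h02 : ‖z 0 - z 2‖ = s) (h12 : ‖z 1 - z 2‖ = s)
    (hcenter : (Γ 0) • z 0 + (Γ 1) • z 1 + (Γ 2) • z 2 = 0)
    (ω : ℝ) (hω : ω = (Γ 0 + Γ 1 + Γ 2) / (Real.pi * s ^ 2))
    (Z : ℝ → Fin 3 → ℂ) (hZ : ∀ t k, Z t k = Complex.exp (ω * t * Complex.I) * z k) :
    SolvesHS Γ (H0 Γ) Z := by
  have hz : Pairwise fun j k => ‖z j - z k‖ = s := by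
    intro j k hjk
    fin_cases j <;> fin_cases k <;>
      first | exact absurd rfl hjk | assumption | (rw [norm_sub_rev]; assumption)
  refine solvesHS_H0_rotation_of_equidistant Γ z hs.ne' hz ?_ ω ?_ Z hZ
  · rwa [Fin.sum_univ_three]
  · rwa [Fin.sum_univ_three]

/-- Three vortices at the vertices of an equilateral triangle with side s and center of
vorticity 0 form a relative equilibrium with ω = (Γ₁+Γ₂+Γ₃)/(π s²). -/
theorem stmt2 (Γ : Fin 3 → ℝ) (hΓ : ∀ k, Γ k ≠ 0)
    (z : Fin 3 → ℂ) (s : ℝ) (hs : 0 < s)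
    (h01 : ‖z 0 - z 1‖ = s) (h02 : ‖z 0 - z 2‖ = s) (h12 : ‖z 1 - z 2‖ = s)
    (hcenter : (Γ 0) • z 0 + (Γ 1) • z 1 + (Γ 2) • z 2 = 0)
    (ω : ℝ) (hω : ω = (Γ 0 + Γ 1 + Γ 2) / (Real.pi * s ^ 2))
    (Z : ℝ → Fin 3 → ℂ) (hZ : ∀ t k, Z t k = Complex.exp (ω * t * Complex.I) * z k) :
    SolvesHS Γ (H0 Γ) Z :=
  stmt2_general Γ z s hs h01 h02 h12 hcenter ω hω Z hZ
end

section
/- Let J: U → ℝ be a C¹ functional on an open subset of a Hilbert space H, invariant under a differentiable S¹-action θ*, and let Z ∈ U with orbit derivative Ż = d/dθ|_{θ=0}(θ*Z) ≠ 0. Suppose v ∈ H satisfies: (i) P_X ∇J(Z + v) = 0 where X = Ż^⊥, (ii) θ ↦ θ*v is differentiable at 0 with derivative v̇, and (iii) 1 + ⟨v̇, Ż⟩/‖Ż‖² ≠ 0. Then ∇J(Z + v) = 0, i.e. Z + v is a critical point of J. -/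
/-!
Differentiating the invariance identity `𝒥 (θ*Z + θ*v) = 𝒥 (Z + v)` at `θ = 0` shows that the
gradient `g` at `Z + v` is orthogonal to `Ż + v̇`. Splitting `v̇` into its component along `Ż`
and a component in `X = Ż^⊥`, which `g` annihilates, turns this into
`(1 + ⟪v̇, Ż⟫ / ‖Ż‖²) ⟪g, Ż⟫ = 0`. Hence `g` is orthogonal to `Ż` as well as to `X`, so to itself.
-/

open scoped RealInnerProductSpace

section

variable {H : Type*} [NormedAddCommGroup H] [InnerProductSpace ℝ H]

theorem HasGradientAt.comp_hasDerivAt [CompleteSpace H] {f : H → ℝ} {g γ' : H} {γ : ℝ → H}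
    {t : ℝ} (hf : HasGradientAt f g (γ t)) (hγ : HasDerivAt γ γ' t) :
    HasDerivAt (f ∘ γ) ⟪g, γ'⟫ t := by
  simpa using hf.hasFDerivAt.comp_hasDerivAt t hγ

theorem HasGradientAt.inner_eq_zero_of_forall_comp_eq [CompleteSpace H] {f : H → ℝ}
    {g γ' : H} {γ : ℝ → H} {t : ℝ} (hf : HasGradientAt f g (γ t)) (hγ : HasDerivAt γ γ' t)
    (hconst : ∀ s, f (γ s) = f (γ t)) : ⟪g, γ'⟫ = 0 :=
  (hf.comp_hasDerivAt hγ).unique <| by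
    simpa [Function.comp_def, hconst] using hasDerivAt_const t (f (γ t))

-- For `z = 0` both sides vanish, thanks to `x / 0 = 0`.
theorem inner_sub_inner_div_norm_sq_smul_self (u z : H) :
    ⟪u - (⟪u, z⟫ / ‖z‖ ^ 2) • z, z⟫ = 0 := by
  rw [inner_sub_left, real_inner_smul_left, real_inner_self_eq_norm_sq,
    div_mul_cancel_of_imp (by simp_all), sub_self]

theorem inner_eq_div_mul_of_forall_orthogonal {g z : H}
    (hg : ∀ w : H, ⟪w, z⟫ = 0 → ⟪g, w⟫ = 0) (u : H) :
    ⟪g, u⟫ = ⟪u, z⟫ / ‖z‖ ^ 2 * ⟪g, z⟫ := by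
  have h := hg _ (inner_sub_inner_div_norm_sq_smul_self u z)
  rwa [inner_sub_right, real_inner_smul_right, sub_eq_zero] at h

theorem eq_zero_of_forall_orthogonal_of_inner_add_eq_zero {g z u : H}
    (hg : ∀ w : H, ⟪w, z⟫ = 0 → ⟪g, w⟫ = 0) (hu : ⟪g, z + u⟫ = 0)
    (hnd : 1 + ⟪u, z⟫ / ‖z‖ ^ 2 ≠ 0) : g = 0 := by
  have hgz : (1 + ⟪u, z⟫ / ‖z‖ ^ 2) * ⟪g, z⟫ = 0 := by
    rw [inner_add_right, inner_eq_div_mul_of_forall_orthogonal hg u] at hu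
    linarith
  have hgz : ⟪g, z⟫ = 0 := (mul_eq_zero.mp hgz).resolve_left hnd
  exact inner_self_eq_zero.mp (hg g hgz)

end

theorem stmt14_general (H : Type*) [NormedAddCommGroup H] [InnerProductSpace ℝ H] [CompleteSpace H]
    (𝒥 : H → ℝ) (act : ℝ → H → H) (Z v Zdot vdot gradJ : H)
    (hact0 : act 0 Z = Z ∧ act 0 v = v)
    (hinv : ∀ θ : ℝ, 𝒥 (act θ Z + act θ v) = 𝒥 (Z + v))
    (hdZ : HasDerivAt (fun θ => act θ Z) Zdot 0)
    (hdv : HasDerivAt (fun θ => act θ v) vdot 0)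
    (hgrad : HasGradientAt 𝒥 gradJ (Z + v))
    (hPX : ∀ w : H, ⟪w, Zdot⟫ = 0 → ⟪gradJ, w⟫ = 0)
    (hnd : 1 + ⟪vdot, Zdot⟫ / ‖Zdot‖ ^ 2 ≠ 0) :
    gradJ = 0 := by
  have horbit_zero : act 0 Z + act 0 v = Z + v := by rw [hact0.1, hact0.2]
  have horbit : ⟪gradJ, Zdot + vdot⟫ = 0 :=
    HasGradientAt.inner_eq_zero_of_forall_comp_eq (γ := fun θ => act θ Z + act θ v)
      (horbit_zero ▸ hgrad) (hdZ.add hdv) fun θ => by simp only [hinv]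
  exact eq_zero_of_forall_orthogonal_of_inner_add_eq_zero hPX horbit hnd

/-- Abstract final step: if 𝒥 is invariant under a differentiable S¹-action, Z has orbit
derivative Ż ≠ 0, the gradient of 𝒥 at Z+v is orthogonal to X = Ż^⊥ (i.e. P_X ∇𝒥(Z+v)=0),
θ ↦ θ*v is differentiable at 0 with derivative v̇, and 1 + ⟨v̇,Ż⟩/‖Ż‖² ≠ 0,
then ∇𝒥(Z+v) = 0. -/
theorem stmt14 (H : Type*) [NormedAddCommGroup H] [InnerProductSpace ℝ H] [CompleteSpace H]
    (𝒥 : H → ℝ) (act : ℝ → H → H) (Z v Zdot vdot gradJ : H)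
    (hZdot : Zdot ≠ 0)
    (hact0 : act 0 Z = Z ∧ act 0 v = v)
    (hinv : ∀ θ : ℝ, 𝒥 (act θ Z + act θ v) = 𝒥 (Z + v))
    (hdZ : HasDerivAt (fun θ => act θ Z) Zdot 0)
    (hdv : HasDerivAt (fun θ => act θ v) vdot 0)
    (hgrad : HasGradientAt 𝒥 gradJ (Z + v))
    (hPX : ∀ w : H, ⟪w, Zdot⟫ = 0 → ⟪gradJ, w⟫ = 0)
    (hnd : 1 + ⟪vdot, Zdot⟫ / ‖Zdot‖ ^ 2 ≠ 0) :
    gradJ = 0 :=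
  stmt14_general H 𝒥 act Z v Zdot vdot gradJ hact0 hinv hdZ hdv hgrad hPX hnd
end
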